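/- Let n ≥ 1, let Ω ⊂ ℝⁿ be a bounded open set with diameter ℓ, let x₀ ∈ Ω, and let 1 < p < ∞ with conjugate exponent p′ = p/(p−1). If a measurable function f : Ω → ℝ satisfies ‖f‖_{L^p(Ω \ B(x₀,t))} < ∞ for every t ∈ (0,ℓ) and ∫_0^ℓ t^{n/p′ − 1} ‖f‖_{L^p(Ω \ B(x₀,t))} dt < ∞, then f ∈ L^1(Ω); moreover ∫_Ω |f(y)| dy ≤ C ∫_0^ℓ t^{n/p′ − 1} ‖f‖_{L^p(Ω \ B(x₀,t))} dt with C not depending on f and x₀. -/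

import Mathlib

open MeasureTheory Metric Set ENNReal Filter Topology

/-!
Cut `Ω \ {x₀}` into the dyadic annuli `r < |y - x₀| ≤ 2r`, `r = ℓ / 2^(k+1)`. By Hölder, the
integral of `|f|` over such an annulus is at most `‖f‖_{L^p(Ω∖B(x₀,r))} |B(x₀,2r)|^{1/p′}`, which
is `r^{n/p′} ‖f‖_{L^p(Ω∖B(x₀,r))}` up to a constant. As `t ↦ ‖f‖_{L^p(Ω∖B(x₀,t))}` is
decreasing, this is in turn controlled by `∫_{r/2}^{r} t^{n/p′-1} ‖f‖_{L^p(Ω∖B(x₀,t))} dt`. The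
intervals `[r/2, r)` are disjoint and lie in `(0, ℓ)`, so summing over the annuli gives the bound.
-/

noncomputable def lpnorm {n : ℕ} (p : ℝ) (E : Set (EuclideanSpace ℝ (Fin n)))
    (f : EuclideanSpace ℝ (Fin n) → ℝ) : ℝ≥0∞ :=
  (∫⁻ y in E, ENNReal.ofReal |f y| ^ p) ^ (1 / p)

variable {n : ℕ}

lemma lpnorm_mono_set {p : ℝ} (hp : 0 < p) {E F : Set (EuclideanSpace ℝ (Fin n))} (h : E ⊆ F)
    (f : EuclideanSpace ℝ (Fin n) → ℝ) : lpnorm p E f ≤ lpnorm p F f :=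
  ENNReal.rpow_le_rpow (lintegral_mono_set h) (by positivity)

lemma antitone_lpnorm_diff_ball {p : ℝ} (hp : 0 < p) (Ω : Set (EuclideanSpace ℝ (Fin n)))
    (x₀ : EuclideanSpace ℝ (Fin n)) (f : EuclideanSpace ℝ (Fin n) → ℝ) :
    Antitone fun t => lpnorm p (Ω \ ball x₀ t) f :=
  fun _ _ hst => lpnorm_mono_set hp (sdiff_subset_sdiff_right (ball_subset_ball hst)) f

lemma lintegral_ofReal_abs_le_lpnorm_mul {p q : ℝ} (hpq : p.HolderConjugate q)
    (E : Set (EuclideanSpace ℝ (Fin n))) {f : EuclideanSpace ℝ (Fin n) → ℝ} (hf : Measurable f) :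
    ∫⁻ y in E, ENNReal.ofReal |f y| ≤ lpnorm p E f * volume E ^ (1 / q) := by
  simpa [lpnorm] using ENNReal.lintegral_mul_le_Lp_mul_Lq (volume.restrict E) hpq
    (f := fun y => ENNReal.ofReal |f y|) (g := 1) hf.abs.ennreal_ofReal.aemeasurable
    aemeasurable_const

lemma volume_closedBall_rpow {q : ℝ} (hq : 0 < q) (x : EuclideanSpace ℝ (Fin n)) {r : ℝ}
    (hr : 0 ≤ r) :
    volume (closedBall x r) ^ (1 / q) =
      ENNReal.ofReal (r ^ (n / q)) *
        volume (closedBall (0 : EuclideanSpace ℝ (Fin n)) 1) ^ (1 / q) := by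
  rw [Measure.addHaar_closedBall' volume x hr, finrank_euclideanSpace_fin,
    ENNReal.mul_rpow_of_nonneg _ _ (by positivity), ENNReal.ofReal_rpow_of_nonneg (by positivity)
      (by positivity), ← Real.rpow_natCast, ← Real.rpow_mul hr, mul_one_div]

lemma min_one_two_rpow_mul_rpow_le {b s t : ℝ} (hs : 0 < s) (hst : s ≤ t) (hts : t ≤ 2 * s) :
    min 1 (2 ^ b) * s ^ b ≤ t ^ b := by
  rcases le_or_gt 0 b with hb | hb
  · calc min 1 (2 ^ b) * s ^ b ≤ 1 * s ^ b := by gcongr; exact min_le_left _ _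
      _ ≤ t ^ b := by rw [one_mul]; exact Real.rpow_le_rpow hs.le hst hb
  · calc min 1 (2 ^ b) * s ^ b ≤ 2 ^ b * s ^ b := by gcongr; exact min_le_right _ _
      _ = (2 * s) ^ b := (Real.mul_rpow zero_le_two hs.le).symm
      _ ≤ t ^ b := Real.rpow_le_rpow_of_nonpos (hs.trans_le hst) hts hb.le

lemma ofReal_mul_le_setLIntegral_Ico {φ : ℝ → ℝ≥0∞} (hφ : Antitone φ) (b : ℝ) {r : ℝ}
    (hr : 0 < r) :
    ENNReal.ofReal (min 1 (2 ^ b) * (r / 2) ^ (b + 1)) * φ r ≤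
      ∫⁻ t in Ico (r / 2) r, ENNReal.ofReal (t ^ b) * φ t := by
  have hr2 : 0 < r / 2 := half_pos hr
  calc ENNReal.ofReal (min 1 (2 ^ b) * (r / 2) ^ (b + 1)) * φ r
      = ∫⁻ _ in Ico (r / 2) r, ENNReal.ofReal (min 1 (2 ^ b) * (r / 2) ^ b) * φ r := by
        rw [setLIntegral_const, Real.volume_Ico, show r - r / 2 = r / 2 by ring,
          Real.rpow_add_one hr2.ne', ← mul_assoc, ENNReal.ofReal_mul (by positivity)]
        ring
    _ ≤ ∫⁻ t in Ico (r / 2) r, ENNReal.ofReal (t ^ b) * φ t := by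
        refine setLIntegral_mono' measurableSet_Ico fun t ht => ?_
        gcongr
        · exact min_one_two_rpow_mul_rpow_le hr2 ht.1 (by linarith [ht.2])
        · exact hφ ht.2.le

/-- With `a = n / q`: `(2r)^a = 4^a (r/2)^a`, and `min 1 (2^(a-1)) (r/2)^(a-1) ≤ t^(a-1)`
for `t ∈ [r/2, r]`. -/
noncomputable def annulusConst (n : ℕ) (q : ℝ) : ℝ≥0∞ :=
  volume (closedBall (0 : EuclideanSpace ℝ (Fin n)) 1) ^ (1 / q) *
    ENNReal.ofReal (4 ^ (n / q) / min 1 (2 ^ (n / q - 1)))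

lemma annulusConst_ne_zero (n : ℕ) (q : ℝ) : annulusConst n q ≠ 0 := by
  have hV := measure_closedBall_pos volume (0 : EuclideanSpace ℝ (Fin n)) one_pos
  refine mul_ne_zero (ENNReal.rpow_pos hV measure_closedBall_lt_top.ne).ne' ?_
  exact (ENNReal.ofReal_pos.2 (div_pos (by positivity) (lt_min one_pos (by positivity)))).ne'

lemma annulusConst_ne_top (n : ℕ) (q : ℝ) : annulusConst n q ≠ ⊤ :=
  ENNReal.mul_ne_top (ENNReal.rpow_ne_top_of_ne_zero
    (measure_closedBall_pos volume _ one_pos).ne' measure_closedBall_lt_top.ne)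
    ENNReal.ofReal_ne_top

lemma setLIntegral_annulus_le {p q : ℝ} (hpq : p.HolderConjugate q)
    (Ω : Set (EuclideanSpace ℝ (Fin n))) (x₀ : EuclideanSpace ℝ (Fin n))
    {f : EuclideanSpace ℝ (Fin n) → ℝ} (hf : Measurable f) {r : ℝ} (hr : 0 ≤ r) :
    ∫⁻ y in Ω ∩ (closedBall x₀ (2 * r) \ closedBall x₀ r), ENNReal.ofReal |f y| ≤
      annulusConst n q *
        ∫⁻ t in Ico (r / 2) r,
          ENNReal.ofReal (t ^ ((n : ℝ) / q - 1)) * lpnorm p (Ω \ ball x₀ t) f := by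
  rcases hr.eq_or_lt with rfl | hr
  · simp
  set a : ℝ := n / q
  set m : ℝ := min 1 (2 ^ (a - 1))
  have hm : 0 < m := lt_min one_pos (by positivity)
  have hlow := ofReal_mul_le_setLIntegral_Ico (antitone_lpnorm_diff_ball hpq.pos Ω x₀ f) (a - 1) hr
  rw [sub_add_cancel] at hlow
  have hconst : ENNReal.ofReal (4 ^ a / m) * ENNReal.ofReal (m * (r / 2) ^ a) =
      ENNReal.ofReal ((2 * r) ^ a) := by
    rw [← ENNReal.ofReal_mul (by positivity), show 2 * r = 4 * (r / 2) by ring,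
      Real.mul_rpow (by norm_num) (by positivity)]
    field_simp
  calc ∫⁻ y in Ω ∩ (closedBall x₀ (2 * r) \ closedBall x₀ r), ENNReal.ofReal |f y|
      ≤ lpnorm p (Ω \ ball x₀ r) f * volume (closedBall x₀ (2 * r)) ^ (1 / q) := by
        refine (lintegral_ofReal_abs_le_lpnorm_mul hpq _ hf).trans (mul_le_mul' ?_ ?_)
        · refine lpnorm_mono_set hpq.pos (fun y hy => ?_) f
          exact ⟨hy.1, fun hb => hy.2.2 (ball_subset_closedBall hb)⟩
        · exact ENNReal.rpow_le_rpow (measure_mono fun y hy => hy.2.1)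
            (one_div_nonneg.2 hpq.symm.nonneg)
    _ = annulusConst n q * (ENNReal.ofReal (m * (r / 2) ^ a) * lpnorm p (Ω \ ball x₀ r) f) := by
        rw [volume_closedBall_rpow hpq.symm.pos x₀ (by positivity), annulusConst, ← hconst]
        ring
    _ ≤ _ := by gcongr

lemma setLIntegral_le_tsum_setLIntegral_annulus {X : Type*} [MetricSpace X] [MeasurableSpace X]
    (μ : Measure X) {x₀ : X} (hx₀ : μ {x₀} = 0) {s : Set X} {ℓ : ℝ} (hs : s ⊆ closedBall x₀ ℓ)
    (g : X → ℝ≥0∞) :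
    ∫⁻ y in s, g y ∂μ ≤
      ∑' k : ℕ, ∫⁻ y in s ∩ (closedBall x₀ (2 * (ℓ / 2 ^ (k + 1))) \
        closedBall x₀ (ℓ / 2 ^ (k + 1))), g y ∂μ := by
  refine (lintegral_mono_set' ?_).trans (lintegral_iUnion_le _ _)
  filter_upwards [measure_eq_zero_iff_ae_notMem.1 hx₀] with y hy hys
  have hd : 0 < dist y x₀ := dist_pos.2 hy
  obtain ⟨k, hk, hk'⟩ := exists_nat_pow_near ((one_le_div hd).2 (hs hys)) one_lt_two
  rw [le_div_iff₀ hd] at hk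
  rw [div_lt_iff₀ hd] at hk'
  refine mem_iUnion.2 ⟨k, hys, ?_, ?_⟩
  · rw [mem_closedBall, show 2 * (ℓ / 2 ^ (k + 1)) = ℓ / 2 ^ k by rw [pow_succ]; field_simp,
      le_div_iff₀ (by positivity)]
    linarith
  · rw [mem_closedBall, not_le, div_lt_iff₀ (by positivity)]
    linarith

lemma tsum_setLIntegral_Ico_le {ℓ : ℝ} (hℓ : 0 ≤ ℓ) (g : ℝ → ℝ≥0∞) :
    ∑' k : ℕ, ∫⁻ t in Ico (ℓ / 2 ^ (k + 1) / 2) (ℓ / 2 ^ (k + 1)), g t ≤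
      ∫⁻ t in Ioo 0 ℓ, g t := by
  set r : ℕ → ℝ := fun k => ℓ / 2 ^ (k + 1)
  have hr : Antitone r := fun j k hjk =>
    div_le_div_of_nonneg_left hℓ (by positivity) (pow_le_pow_right₀ one_le_two (by omega))
  have hr_succ : ∀ k, r k / 2 = r (k + 1) := fun k => by simp only [r, div_div, pow_succ]
  have hdisj : Pairwise (Function.onFun Disjoint fun k => Ico (r k / 2) (r k)) := by
    simpa only [hr_succ, Order.succ_eq_add_one] using hr.pairwise_disjoint_on_Ico_succ
  rw [← lintegral_iUnion (fun _ => measurableSet_Ico) hdisj]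
  refine lintegral_mono_set (iUnion_subset fun k t ht => ?_)
  have hrk : 0 < r k := by linarith [ht.1, ht.2]
  have hℓpos : 0 < ℓ := (div_pos_iff_of_pos_right (by positivity)).1 hrk
  have hrℓ : r k ≤ ℓ / 2 := by simpa [r] using hr (Nat.zero_le k)
  constructor <;> linarith [ht.1, ht.2]

theorem statement9_general
    (n : ℕ) (hn : 1 ≤ n)
    (Ω : Set (EuclideanSpace ℝ (Fin n))) (hΩb : Bornology.IsBounded Ω)
    (p pc : ℝ) (hp : 1 < p) (hpc : pc = p / (p - 1))
    (ℓ : ℝ) (hℓ : ℓ = Metric.diam Ω) :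
    ∃ C > 0, ∀ x₀ ∈ Ω, ∀ f : EuclideanSpace ℝ (Fin n) → ℝ, Measurable f →
      (∀ t ∈ Ioo (0 : ℝ) ℓ, lpnorm p (Ω \ ball x₀ t) f < ⊤) →
      (∫⁻ t in Ioo (0 : ℝ) ℓ,
          ENNReal.ofReal (t ^ ((n : ℝ) / pc - 1)) * lpnorm p (Ω \ ball x₀ t) f) < ⊤ →
      IntegrableOn f Ω volume ∧
        (∫⁻ y in Ω, ENNReal.ofReal |f y|) ≤
          ENNReal.ofReal C *
            ∫⁻ t in Ioo (0 : ℝ) ℓ,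
              ENNReal.ofReal (t ^ ((n : ℝ) / pc - 1)) * lpnorm p (Ω \ ball x₀ t) f := by
  have hpq : p.HolderConjugate pc := (Real.holderConjugate_iff_eq_conjExponent hp).2 hpc
  have : NeZero n := ⟨by omega⟩
  have hK := annulusConst_ne_top n pc
  refine ⟨(annulusConst n pc).toReal, ENNReal.toReal_pos (annulusConst_ne_zero n pc) hK,
    fun x₀ hx₀ f hf _ hfinite => ?_⟩
  rw [ENNReal.ofReal_toReal hK]
  have hℓ0 : 0 ≤ ℓ := hℓ ▸ diam_nonneg
  have hΩ : Ω ⊆ closedBall x₀ ℓ := fun y hy =>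
    mem_closedBall.2 (hℓ ▸ dist_le_diam_of_mem hΩb hy hx₀)
  have hmain := calc ∫⁻ y in Ω, ENNReal.ofReal |f y|
      _ ≤ ∑' k : ℕ, ∫⁻ y in Ω ∩ (closedBall x₀ (2 * (ℓ / 2 ^ (k + 1))) \
            closedBall x₀ (ℓ / 2 ^ (k + 1))), ENNReal.ofReal |f y| :=
        setLIntegral_le_tsum_setLIntegral_annulus volume (measure_singleton x₀) hΩ _
      _ ≤ ∑' k : ℕ, annulusConst n pc * ∫⁻ t in Ico (ℓ / 2 ^ (k + 1) / 2) (ℓ / 2 ^ (k + 1)),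
            ENNReal.ofReal (t ^ ((n : ℝ) / pc - 1)) * lpnorm p (Ω \ ball x₀ t) f :=
        ENNReal.tsum_le_tsum fun k =>
          setLIntegral_annulus_le hpq Ω x₀ hf (div_nonneg hℓ0 (by positivity))
      _ ≤ annulusConst n pc * ∫⁻ t in Ioo 0 ℓ,
            ENNReal.ofReal (t ^ ((n : ℝ) / pc - 1)) * lpnorm p (Ω \ ball x₀ t) f := by
        rw [ENNReal.tsum_mul_left]
        exact mul_le_mul_right (tsum_setLIntegral_Ico_le hℓ0 _) _
  refine ⟨⟨hf.aestronglyMeasurable, ?_⟩, hmain⟩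
  rw [hasFiniteIntegral_iff_norm]
  simpa only [Real.norm_eq_abs] using hmain.trans_lt (mul_lt_top hK.lt_top hfinite)

/-- Remark 4.5: if `‖f‖_{L^p(Ω∖B(x₀,t))} < ∞` for each `t ∈ (0,ℓ)` and
`∫_0^ℓ t^{n/p′−1} ‖f‖_{L^p(Ω∖B(x₀,t))} dt < ∞`, then `f ∈ L^1(Ω)`, and moreover
`∫_Ω |f| ≤ C ∫_0^ℓ t^{n/p′−1} ‖f‖_{L^p(Ω∖B(x₀,t))} dt` with `C` independent of
`f` and `x₀`. -/
theorem statement9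
    (n : ℕ) (hn : 1 ≤ n)
    (Ω : Set (EuclideanSpace ℝ (Fin n))) (hΩo : IsOpen Ω) (hΩb : Bornology.IsBounded Ω)
    (p pc : ℝ) (hp : 1 < p) (hpc : pc = p / (p - 1))
    (ℓ : ℝ) (hℓ : ℓ = Metric.diam Ω) :
    ∃ C > 0, ∀ x₀ ∈ Ω, ∀ f : EuclideanSpace ℝ (Fin n) → ℝ, Measurable f →
      (∀ t ∈ Ioo (0 : ℝ) ℓ, lpnorm p (Ω \ ball x₀ t) f < ⊤) →
      (∫⁻ t in Ioo (0 : ℝ) ℓ,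
          ENNReal.ofReal (t ^ ((n : ℝ) / pc - 1)) * lpnorm p (Ω \ ball x₀ t) f) < ⊤ →
      IntegrableOn f Ω volume ∧
        (∫⁻ y in Ω, ENNReal.ofReal |f y|) ≤
          ENNReal.ofReal C *
            ∫⁻ t in Ioo (0 : ℝ) ℓ,
              ENNReal.ofReal (t ^ ((n : ℝ) / pc - 1)) * lpnorm p (Ω \ ball x₀ t) f :=
  statement9_general n hn Ω hΩb p pc hp hpc ℓ hℓ
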